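/- Let n ≥ 1 and let id ∈ Sym(n) denote the identity permutation. Then Σ_{w ∈ S_{n+1}} y^{ino(w,id)} = Σ_{w ∈ S_{n+1}} y^{ℓ_R(w)}, as polynomials in ℤ[y], where ℓ_R(w) = (n+1) − c(w) is the reflection length of w and c(w) denotes the number of cycles of the permutation w (fixed points counted as cycles). -/

import Mathlib

open scoped Classical

/-- min of the values (in `{1,…,n+1}`, i.e. `(w p).val + 1`) of the block left of bar `σ i`
at step `i+1` (0-indexed step `i`) of the merging process of `(w,σ)`. -/
noncomputable def minL (n : ℕ) (w : Equiv.Perm (Fin (n+1))) (σ : Equiv.Perm (Fin n)) (i : Fin n) : ℕ :=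
  sInf {v : ℕ | ∃ p : Fin (n+1), p.val ≤ (σ i).val ∧
    (∀ j : Fin n, p.val ≤ j.val → j.val < (σ i).val → σ.symm j < i) ∧ v = (w p).val + 1}

/-- min of the values of the block right of bar `σ i` at step `i+1`. -/
noncomputable def minR (n : ℕ) (w : Equiv.Perm (Fin (n+1))) (σ : Equiv.Perm (Fin n)) (i : Fin n) : ℕ :=
  sInf {v : ℕ | ∃ q : Fin (n+1), (σ i).val < q.val ∧
    (∀ j : Fin n, (σ i).val < j.val → j.val < q.val → σ.symm j < i) ∧ v = (w q).val + 1}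

/-- `λ_{i+1}` of the pair `(w,σ)`: `max{min B, min B'}` with positive sign iff `min B < min B'`. -/
noncomputable def lam (n : ℕ) (w : Equiv.Perm (Fin (n+1))) (σ : Equiv.Perm (Fin n)) (i : Fin n) : ℤ :=
  if minL n w σ i < minR n w σ i then (max (minL n w σ i) (minR n w σ i) : ℤ)
  else -(max (minL n w σ i) (minR n w σ i) : ℤ)

/-- `ino(w,σ) = #{i : λ_i > 0}`. -/
noncomputable def ino (n : ℕ) (w : Equiv.Perm (Fin (n+1))) (σ : Equiv.Perm (Fin n)) : ℕ :=
  (Finset.univ.filter fun i : Fin n => 0 < lam n w σ i).card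

/-- `des(σ) = #{i ∈ {1,…,n−1} : σ(i) > σ(i+1)}` (0-indexed). -/
noncomputable def des (n : ℕ) (σ : Equiv.Perm (Fin n)) : ℕ :=
  (Finset.univ.filter fun k : Fin n => ∃ h : k.val + 1 < n, σ ⟨k.val + 1, h⟩ < σ k).card

/-- `asc(λ(w,σ)) = #{i ∈ {1,…,n−1} : λ_i < λ_{i+1}}` (0-indexed). -/
noncomputable def asc (n : ℕ) (w : Equiv.Perm (Fin (n+1))) (σ : Equiv.Perm (Fin n)) : ℕ :=
  (Finset.univ.filter fun k : Fin n => ∃ h : k.val + 1 < n, lam n w σ k < lam n w σ ⟨k.val + 1, h⟩).card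

/-- The setoid on `Fin (n+1)` whose classes are the cycles (orbits) of `w`,
fixed points included. -/
def cycleSetoid (n : ℕ) (w : Equiv.Perm (Fin (n+1))) : Setoid (Fin (n+1)) :=
  ⟨w.SameCycle, ⟨fun x => Equiv.Perm.SameCycle.refl w x, fun h => h.symm, fun h h' => h.trans h'⟩⟩

/-- The number of cycles of `w` (fixed points counted as cycles). -/
noncomputable def numCycles (n : ℕ) (w : Equiv.Perm (Fin (n+1))) : ℕ :=
  Nat.card (Quotient (cycleSetoid n w))

/-
Both generating functions satisfy `F₀ = 1`, `Fₙ₊₁ = (1 + (n + 1) y) Fₙ`, hence equal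
`∏_{k=1}^{n} (1 + k y)`. For `σ = id`, step `i` merges the prefix `{w_1, …, w_i}` with `{w_{i+1}}`,
so `λ_i > 0` exactly when `w_{i+1}` is not a left-to-right minimum of `w`. Appending
a last letter to a permutation of `n + 1` letters creates a new non-minimum unless that letter is
the smallest value, which gives the factor `1 + (n + 1) y`. On the other side, inserting a new
point into a permutation either as a fixed point (one more cycle) or just before one of the
`n + 1` old points in its cycle (same number of cycles) gives the same factor for `y ^ ℓ_R`.
-/

open Equiv Finset

section InsertionRecursion

variable {R : Type*} [CommSemiring R]

lemma sum_pow_ite_eq_zero (x : R) (m : ℕ) :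
    ∑ v : Fin (m + 1), x ^ (if v = 0 then 0 else 1) = 1 + m * x := by
  simp [Fin.sum_univ_succ, Fin.succ_ne_zero]

lemma sum_pow_of_equiv_prod {α β : Type*} [Fintype α] [Fintype β] (x : R) {m : ℕ}
    (ins : Fin (m + 1) × α ≃ β) (s : α → ℕ) (t : β → ℕ)
    (ht : ∀ v a, t (ins (v, a)) = s a + if v = 0 then 0 else 1) :
    ∑ b, x ^ t b = (1 + m * x) * ∑ a, x ^ s a := by
  rw [← ins.sum_comp, Fintype.sum_prod_type, ← sum_pow_ite_eq_zero, Finset.sum_mul]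
  simp_rw [ht, pow_add, Finset.mul_sum, mul_comm]

theorem sum_pow_eq_prod_of_insertion (x : R) (s : ∀ n, Perm (Fin (n + 1)) → ℕ)
    (ins : ∀ n, Fin (n + 2) × Perm (Fin (n + 1)) ≃ Perm (Fin (n + 2)))
    (hs₀ : ∀ w, s 0 w = 0)
    (hs : ∀ n v e, s (n + 1) (ins n (v, e)) = s n e + if v = 0 then 0 else 1) (n : ℕ) :
    ∑ w, x ^ s n w = ∏ k ∈ range n, (1 + (k + 1) * x) := by
  induction n with
  | zero => simp [hs₀]
  | succ n ih =>
    rw [sum_pow_of_equiv_prod x (ins n) (s n) (s (n + 1)) (hs n), ih, prod_range_succ, mul_comm]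
    push_cast
    ring

end InsertionRecursion

theorem card_quotient_eq_of_surjective {α β : Type*} {r : Setoid α} (π : α → β)
    (hπ : Function.Surjective π) (h : ∀ x y, r x y ↔ π x = π y) :
    Nat.card (Quotient r) = Nat.card β := by
  obtain rfl : r = Setoid.ker π := Setoid.ext h
  exact Nat.card_congr (Setoid.quotientKerEquivOfSurjective π hπ)

namespace Equiv.Perm

variable {α β : Type*}

theorem SameCycle.map_of_sameCycle_apply {σ : Perm α} {τ : Perm β} (π : α → β)
    (hπ : ∀ x, τ.SameCycle (π x) (π (σ x))) {x y : α} (h : σ.SameCycle x y) :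
    τ.SameCycle (π x) (π y) := by
  obtain ⟨i, rfl⟩ := h
  induction i using Int.induction_on with
  | zero => rfl
  | succ i ih =>
    rw [add_comm, zpow_add, zpow_one, mul_apply]
    exact ih.trans (hπ _)
  | pred i ih =>
    rw [sub_eq_neg_add, zpow_add, zpow_neg_one, mul_apply]
    exact ih.trans (by simpa using (hπ (σ⁻¹ ((σ ^ (-(i : ℤ))) x))).symm)

noncomputable def cycleCount (σ : Perm α) : ℕ := Nat.card (Quotient (SameCycle.setoid σ))

theorem _root_.numCycles_eq_cycleCount (n : ℕ) (w : Perm (Fin (n + 1))) :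
    numCycles n w = cycleCount w :=
  rfl

theorem cycleCount_permCongr (e : α ≃ β) (σ : Perm α) :
    cycleCount (e.permCongr σ) = cycleCount σ := by
  refine Nat.card_congr (Quotient.congr e.symm fun x y =>
    show SameCycle _ x y ↔ SameCycle _ _ _ from ⟨?_, fun h => ?_⟩)
  · exact SameCycle.map_of_sameCycle_apply e.symm fun x => by simp [SameCycle.refl]
  · simpa using SameCycle.map_of_sameCycle_apply e
      (fun x => by simpa using (SameCycle.refl (e.permCongr σ) (e x)).apply_right) h

theorem sameCycle_optionCongr_some {σ : Perm α} {a b : α} :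
    SameCycle (optionCongr σ) (some a) (some b) ↔ σ.SameCycle a b := by
  refine ⟨SameCycle.map_of_sameCycle_apply (fun o : Option α => o.getD a) ?_,
    SameCycle.map_of_sameCycle_apply some ?_⟩
  · rintro (_ | x) <;> simp [SameCycle.refl]
  · exact fun x => (SameCycle.refl _ (some x)).apply_right

theorem cycleCount_optionCongr [Finite α] (σ : Perm α) :
    cycleCount (optionCongr σ) = cycleCount σ + 1 := by
  rw [cycleCount, cycleCount, ← Finite.card_option]
  refine card_quotient_eq_of_surjective (Option.map (Quotient.mk _))
    (by rintro (_ | ⟨⟨a⟩⟩); exacts [⟨none, rfl⟩, ⟨some a, rfl⟩]) ?_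
  have hnone : Function.IsFixedPt (optionCongr σ) none := rfl
  rintro (_ | a) (_ | b)
  · simp
  · simpa using fun h => Option.some_ne_none b (h.eq_of_left hnone).symm
  · simpa using fun h => Option.some_ne_none a (h.eq_of_right hnone)
  · simp only [Option.map_some, Option.some.injEq, Quotient.eq]
    exact sameCycle_optionCongr_some

-- `none` joins the cycle of `b`, just before `b`; projecting `none ↦ b` matches up the cycles.
theorem cycleCount_swap_none_mul_optionCongr [DecidableEq α] (b : α) (σ : Perm α) :
    cycleCount (swap none (some b) * optionCongr σ) = cycleCount σ := by
  set w : Perm (Option α) := swap none (some b) * optionCongr σ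
  have hw_none : w none = some b := by simp [w]
  have hw_some : ∀ a, w (some a) = if σ a = b then none else some (σ a) := by
    intro a
    by_cases h : σ a = b <;> simp [w, h, swap_apply_of_ne_of_ne]
  have hw_some_getD : ∀ a, (w (some a)).getD b = σ a := by
    intro a
    rw [hw_some]
    split_ifs with h <;> simp [h]
  have hw_step : ∀ a, w.SameCycle (some a) (some (σ a)) := by
    intro a
    by_cases h : σ a = b
    · have : some (σ a) = w (w (some a)) := by rw [hw_some, if_pos h, hw_none, h]
      exact this ▸ (SameCycle.refl _ _).apply_right.apply_right
    · have : some (σ a) = w (some a) := by rw [hw_some, if_neg h]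
      exact this ▸ (SameCycle.refl _ _).apply_right
  have hw_getD : ∀ x : Option α, w.SameCycle x (some (x.getD b)) := by
    rintro (_ | a)
    · exact hw_none ▸ (SameCycle.refl _ _).apply_right
    · rfl
  refine card_quotient_eq_of_surjective (fun x => Quotient.mk _ (x.getD b))
    (by rintro ⟨a⟩; exact ⟨some a, rfl⟩) fun x y => ?_
  rw [Quotient.eq]
  refine ⟨SameCycle.map_of_sameCycle_apply (fun x : Option α => x.getD b) ?_, fun h => ?_⟩
  · rintro (_ | a)
    · simp only [hw_none, Option.getD_none, Option.getD_some]; rfl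
    · rw [hw_some_getD]; exact (SameCycle.refl _ _).apply_right
  · exact (hw_getD x).trans
      ((SameCycle.map_of_sameCycle_apply some hw_step h).trans (hw_getD y).symm)

theorem cycleCount_decomposeOption_symm [Finite α] [DecidableEq α] (x : Option α)
    (σ : Perm α) :
    cycleCount (decomposeOption.symm (x, σ)) = cycleCount σ + if x = none then 1 else 0 := by
  change cycleCount (swap none x * optionCongr σ) = _
  rcases x with _ | b
  · rw [swap_self, ← one_def, one_mul, cycleCount_optionCongr, if_pos rfl]
  · rw [cycleCount_swap_none_mul_optionCongr, if_neg (Option.some_ne_none b), add_zero]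

theorem cycleCount_decomposeFin_symm {n : ℕ} (p : Fin (n + 1)) (σ : Perm (Fin n)) :
    cycleCount (decomposeFin.symm (p, σ)) = cycleCount σ + if p = 0 then 1 else 0 := by
  change cycleCount ((finSuccEquiv n).symm.permCongr (decomposeOption.symm (finSuccEquiv n p, σ)))
    = _
  rw [cycleCount_permCongr, cycleCount_decomposeOption_symm]
  simp

theorem cycleCount_le_card [Finite α] (σ : Perm α) : cycleCount σ ≤ Nat.card α :=
  Nat.card_le_card_of_surjective _ Quotient.mk_surjective

theorem cycleCount_pos [Finite α] [Nonempty α] (σ : Perm α) : 0 < cycleCount σ :=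
  have : Nonempty (Quotient (SameCycle.setoid σ)) := .map (Quotient.mk _) ‹_›
  Nat.card_pos

theorem card_sub_cycleCount_decomposeFin_symm {n : ℕ} (v : Fin (n + 2)) (e : Perm (Fin (n + 1))) :
    n + 2 - cycleCount (decomposeFin.symm (v, e)) =
      n + 1 - cycleCount e + if v = 0 then 0 else 1 := by
  have := cycleCount_le_card e
  rw [Nat.card_fin] at this
  rw [cycleCount_decomposeFin_symm]
  split_ifs <;> omega

end Equiv.Perm

section LeftToRightMinima

variable {n : ℕ}

def nonLeftToRightMinima {m : ℕ} (w : Perm (Fin m)) : Finset (Fin m) := {j | ∃ p < j, w p < w j}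

theorem minR_pos (w : Perm (Fin (n + 1))) (σ : Perm (Fin n)) (i : Fin n) : 0 < minR n w σ i := by
  refine Nat.pos_of_ne_zero fun h => ?_
  rcases Nat.sInf_eq_zero.1 h with ⟨q, -, -, hq⟩ | hempty
  · omega
  · refine hempty.subset ⟨(σ i).succ, by simp, fun j h₁ h₂ => ?_, rfl⟩
    simp only [Fin.val_succ] at h₂
    omega

theorem lam_pos_iff (w : Perm (Fin (n + 1))) (σ : Perm (Fin n)) (i : Fin n) :
    0 < lam n w σ i ↔ minL n w σ i < minR n w σ i := by
  have := minR_pos w σ i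
  rw [lam]
  split_ifs with h <;> simp only [h, iff_true, iff_false] <;> omega

theorem minR_one (w : Perm (Fin (n + 1))) (i : Fin n) : minR n w 1 i = w i.succ + 1 := by
  rw [minR, ← csInf_singleton ((w i.succ : ℕ) + 1)]
  congr 1
  ext v
  constructor
  · rintro ⟨q, hiq, hgap, rfl⟩
    obtain rfl : q = i.succ := by
      by_contra hne
      have hq : i.val + 1 < q.val := by
        have : q.val ≠ i.val + 1 := fun h => hne (Fin.ext h)
        simp only [Perm.one_apply] at hiq
        omega
      have : i.val + 1 < i.val := hgap ⟨i.val + 1, by omega⟩ (by simp) hq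
      omega
    rfl
  · rintro rfl
    exact ⟨i.succ, by simp, fun j h₁ h₂ => by simp at h₁ h₂; omega, rfl⟩

theorem minL_one_lt_iff (w : Perm (Fin (n + 1))) (i : Fin n) (m : ℕ) :
    minL n w 1 i < m ↔ ∃ p ≤ i.castSucc, (w p : ℕ) + 1 < m := by
  rw [minL, csInf_lt_iff (OrderBot.bddBelow _)]
  · constructor
    · rintro ⟨_, ⟨p, hp, -, rfl⟩, hlt⟩
      exact ⟨p, hp, hlt⟩
    · rintro ⟨p, hp, hlt⟩
      exact ⟨_, ⟨p, hp, fun j _ h => h, rfl⟩, hlt⟩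
  · exact ⟨_, i.castSucc, by simp, fun j _ h => h, rfl⟩

theorem lam_one_pos_iff (w : Perm (Fin (n + 1))) (i : Fin n) :
    0 < lam n w 1 i ↔ ∃ p < i.succ, w p < w i.succ := by
  rw [lam_pos_iff, minR_one, minL_one_lt_iff]
  simp only [Fin.le_castSucc_iff, add_lt_add_iff_right, Fin.val_fin_lt]

theorem ino_one (w : Perm (Fin (n + 1))) : ino n w 1 = #(nonLeftToRightMinima w) := by
  rw [nonLeftToRightMinima, Fin.card_filter_univ_succ, if_neg (by simp), ino]
  congr 1
  exact filter_congr fun i _ => lam_one_pos_iff w i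

/-- The permutation with last value `v` whose first `n + 1` values are in the relative order
of those of `e`. -/
def snocPerm (v : Fin (n + 2)) (e : Perm (Fin (n + 1))) : Perm (Fin (n + 2)) :=
  finSuccEquivLast.trans (e.optionCongr.trans (finSuccEquiv' v).symm)

@[simp]
theorem snocPerm_castSucc (v : Fin (n + 2)) (e : Perm (Fin (n + 1))) (x : Fin (n + 1)) :
    snocPerm v e x.castSucc = v.succAbove (e x) := by
  simp [snocPerm]

@[simp]
theorem snocPerm_last (v : Fin (n + 2)) (e : Perm (Fin (n + 1))) :
    snocPerm v e (Fin.last (n + 1)) = v := by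
  simp [snocPerm]

theorem snocPerm_injective :
    Function.Injective fun p : Fin (n + 2) × Perm (Fin (n + 1)) => snocPerm p.1 p.2 := by
  rintro ⟨v, e⟩ ⟨v', e'⟩ h
  obtain rfl : v = v' := by simpa using congrArg (· (Fin.last (n + 1))) h
  have he : e = e' := Equiv.ext fun x => by simpa using congrArg (· x.castSucc) h
  rw [he]

noncomputable def snocPermEquiv : Fin (n + 2) × Perm (Fin (n + 1)) ≃ Perm (Fin (n + 2)) :=
  .ofBijective _ ((Fintype.bijective_iff_injective_and_card _).2
    ⟨snocPerm_injective, by simp [Fintype.card_perm, Nat.factorial_succ]⟩)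

theorem card_nonLeftToRightMinima_snocPerm (v : Fin (n + 2)) (e : Perm (Fin (n + 1))) :
    #(nonLeftToRightMinima (snocPerm v e)) =
      #(nonLeftToRightMinima e) + if v = 0 then 0 else 1 := by
  have hcast (x : Fin (n + 1)) : (∃ p < x.castSucc, snocPerm v e p < snocPerm v e x.castSucc) ↔
      ∃ p < x, e p < e x := by
    constructor
    · rintro ⟨p, hp, hlt⟩
      obtain ⟨p, rfl⟩ := Fin.exists_castSucc_eq.2 (hp.trans (Fin.castSucc_lt_last x)).ne
      simp only [Fin.castSucc_lt_castSucc_iff, snocPerm_castSucc, Fin.succAbove_lt_succAbove_iff]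
        at hp hlt
      exact ⟨p, hp, hlt⟩
    · rintro ⟨p, hp, hlt⟩
      exact ⟨p.castSucc, by simpa using hp, by simpa using hlt⟩
  have hlast : (∃ p < Fin.last (n + 1), snocPerm v e p < snocPerm v e (Fin.last (n + 1))) ↔
      v ≠ 0 := by
    rw [snocPerm_last]
    constructor
    · rintro ⟨p, -, hlt⟩
      exact ((Fin.zero_le _).trans_lt hlt).ne'
    · intro hv
      refine ⟨(snocPerm v e).symm 0, (Fin.le_last _).lt_of_ne fun h => hv ?_,
        by simpa using Fin.pos_iff_ne_zero.2 hv⟩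
      rw [← snocPerm_last v e, ← h, apply_symm_apply]
  rw [nonLeftToRightMinima, nonLeftToRightMinima, card_filter, card_filter, Fin.sum_univ_castSucc]
  simp only [hcast, hlast]
  split_ifs <;> simp_all

end LeftToRightMinima

theorem ino_id_equidistributed_with_reflection_length_general (n : ℕ) :
    ∑ w : Equiv.Perm (Fin (n+1)), (Polynomial.X : Polynomial ℤ) ^ ino n w 1
      = ∑ w : Equiv.Perm (Fin (n+1)), (Polynomial.X : Polynomial ℤ) ^ ((n + 1) - numCycles n w) := by
  have h_ino := sum_pow_eq_prod_of_insertion (Polynomial.X : Polynomial ℤ)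
    (fun _ w => #(nonLeftToRightMinima w)) (fun _ => snocPermEquiv)
    (fun w => by simp [nonLeftToRightMinima]) (fun _ => card_nonLeftToRightMinima_snocPerm) n
  have h_refl := sum_pow_eq_prod_of_insertion (Polynomial.X : Polynomial ℤ)
    (fun n w => n + 1 - w.cycleCount) (fun _ => Perm.decomposeFin.symm)
    (fun w => Nat.sub_eq_zero_of_le w.cycleCount_pos)
    (fun _ => Perm.card_sub_cycleCount_decomposeFin_symm) n
  simp only [ino_one, numCycles_eq_cycleCount]
  exact h_ino.trans h_refl.symm

/-- `Σ_{w ∈ S_{n+1}} y^{ino(w,id)} = Σ_{w ∈ S_{n+1}} y^{ℓ_R(w)}` in `ℤ[y]`,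
where `ℓ_R(w) = (n+1) − c(w)` is the reflection length and `c(w)` the number of cycles. -/
theorem ino_id_equidistributed_with_reflection_length (n : ℕ) (hn : 1 ≤ n) :
    ∑ w : Equiv.Perm (Fin (n+1)), (Polynomial.X : Polynomial ℤ) ^ ino n w 1
      = ∑ w : Equiv.Perm (Fin (n+1)), (Polynomial.X : Polynomial ℤ) ^ ((n + 1) - numCycles n w) :=
  ino_id_equidistributed_with_reflection_length_general n
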